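/- Let G be an α-action, n-player game with payoffs in [0,1], ε ∈ (0,1), and G' the majority-group game with s = 2α²·⌈ln(n/ε)⌉ players per group. If x is an ε-approximate Nash equilibrium of G', and y is obtained from the majority distributions x̄_i by truncating entries ≤ ε/n and renormalizing, then y is a (4αε)-well-supported Nash equilibrium of G. -/

import Mathlib

open Finset

def IsDist (α : ℕ) (p : Fin α → ℝ) : Prop := (∀ k, 0 ≤ p k) ∧ ∑ k, p k = 1

noncomputable def expPay {I : Type*} [Fintype I] [DecidableEq I] {α : ℕ}
    (u : (I → Fin α) → ℝ) (x : I → Fin α → ℝ) : ℝ :=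
  ∑ a : I → Fin α, (∏ j, x j (a j)) * u a

noncomputable def purePay {I : Type*} [Fintype I] [DecidableEq I] {α : ℕ}
    (u : (I → Fin α) → ℝ) (x : I → Fin α → ℝ) (i : I) (k : Fin α) : ℝ :=
  expPay u (Function.update x i (fun b => if b = k then (1:ℝ) else 0))

def IsANE {I : Type*} [Fintype I] [DecidableEq I] {α : ℕ}
    (u : I → (I → Fin α) → ℝ) (x : I → Fin α → ℝ) (ε : ℝ) : Prop :=
  ∀ i k, purePay (u i) x i k - ε ≤ expPay (u i) x

def IsWSNE {I : Type*} [Fintype I] [DecidableEq I] {α : ℕ}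
    (u : I → (I → Fin α) → ℝ) (x : I → Fin α → ℝ) (ε : ℝ) : Prop :=
  ∀ i k, 0 < x i k → ∀ k', purePay (u i) x i k' - ε ≤ purePay (u i) x i k

noncomputable def tvDist {α : ℕ} (p q : Fin α → ℝ) : ℝ := (1/2) * ∑ k, |p k - q k|

def actCount {s α : ℕ} (g : Fin s → Fin α) (k : Fin α) : ℕ :=
  (Finset.univ.filter fun j => g j = k).card

noncomputable def maj {s α : ℕ} [NeZero α] (g : Fin s → Fin α) : Fin α :=
  (Finset.univ.filter fun k : Fin α => ∀ k', actCount g k' ≤ actCount g k).min' (by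
    obtain ⟨k, -, hk⟩ := Finset.exists_max_image Finset.univ (actCount g) ⟨default, mem_univ _⟩
    exact ⟨k, mem_filter.mpr ⟨mem_univ k, fun k' => hk k' (mem_univ k')⟩⟩)

noncomputable def groupPayoff {n s α : ℕ} [NeZero α]
    (u : Fin n → (Fin n → Fin α) → ℝ) (i : Fin n) (j : Fin s)
    (a : Fin n × Fin s → Fin α) : ℝ :=
  u i (Function.update (fun i' => maj fun j' => a (i', j')) i (a (i, j)))

noncomputable def majDist {n s α : ℕ} [NeZero α]
    (x : Fin n × Fin s → Fin α → ℝ) (i : Fin n) (k : Fin α) : ℝ :=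
  ∑ g : Fin s → Fin α, (∏ j, x (i, j) (g j)) * (if maj g = k then 1 else 0)

/-!
A member of group `i` of `G'` faces exactly player `i`'s payoffs in `G` against the majority
distributions `x̄` of the other groups. If `k` is more than `2 α ε` worse than a best response
against `x̄`, the `ε`-ANE condition lets every member of group `i` play `k` with probability at
most `1 / (2 α)`; by Hoeffding's lemma `k` is then the majority of the `s` independent draws with
probability at most `exp (-s / (2 α²)) ≤ ε / n`, so `k` is cut from the support of `y i`.
Truncation moves each `x̄ i'` by at most `q / (1 - q)` in total variation, where `q = α ε / n`,
and expected payoffs in `[0, 1]` are `1`-Lipschitz in each player's distribution for total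
variation; summing over the other `n - 1` players, pure payoffs against `y` and against `x̄` differ
by at most `α ε` when `α ε ≤ 1` (otherwise the claim is trivial). Altogether the loss is at most
`α ε + 2 α ε + α ε`.
-/

section ProductProfiles

variable {I : Type*} [DecidableEq I] {α : ℕ}

lemma IsDist.le_one {p : Fin α → ℝ} (hp : IsDist α p) (k : Fin α) : p k ≤ 1 :=
  hp.2 ▸ single_le_sum (fun j _ => hp.1 j) (mem_univ k)

lemma isDist_pure (k : Fin α) : IsDist α (fun b => if b = k then (1 : ℝ) else 0) :=
  ⟨fun b => by by_cases h : b = k <;> simp [h], by simp⟩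

lemma IsDist.update {x : I → Fin α → ℝ} (hx : ∀ i, IsDist α (x i)) (i : I) {p : Fin α → ℝ}
    (hp : IsDist α p) (j : I) : IsDist α (Function.update x i p j) := by
  rcases eq_or_ne j i with rfl | h
  · rwa [Function.update_self]
  · rw [Function.update_of_ne h]; exact hx j

variable [Fintype I]

lemma sum_prod_eq_one {x : I → Fin α → ℝ} (hx : ∀ i, IsDist α (x i)) :
    ∑ a : I → Fin α, ∏ i, x i (a i) = 1 := by
  rw [← Fintype.prod_sum]
  simp [fun i => (hx i).2]

lemma expPay_mem_Icc {u : (I → Fin α) → ℝ} (hu : ∀ a, u a ∈ Set.Icc (0 : ℝ) 1)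
    {x : I → Fin α → ℝ} (hx : ∀ i, IsDist α (x i)) : expPay u x ∈ Set.Icc (0 : ℝ) 1 := by
  have hw : ∀ a : I → Fin α, 0 ≤ ∏ j, x j (a j) := fun a => prod_nonneg fun j _ => (hx j).1 _
  refine ⟨sum_nonneg fun a _ => mul_nonneg (hw a) (hu a).1, ?_⟩
  calc expPay u x ≤ ∑ a : I → Fin α, ∏ j, x j (a j) :=
        sum_le_sum fun a _ => mul_le_of_le_one_right (hw a) (hu a).2
    _ = 1 := sum_prod_eq_one hx

lemma purePay_mem_Icc {u : (I → Fin α) → ℝ} (hu : ∀ a, u a ∈ Set.Icc (0 : ℝ) 1)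
    {x : I → Fin α → ℝ} (hx : ∀ i, IsDist α (x i)) (i : I) (k : Fin α) :
    purePay u x i k ∈ Set.Icc (0 : ℝ) 1 :=
  expPay_mem_Icc hu (IsDist.update hx i (isDist_pure k))

lemma prod_update_apply (x : I → Fin α → ℝ) (i : I) (p : Fin α → ℝ) (a : I → Fin α) :
    ∏ j, Function.update x i p j (a j) = p (a i) * ∏ j ∈ univ \ {i}, x j (a j) := by
  simp_rw [Function.apply_update (fun j (q : Fin α → ℝ) => q (a j))]
  exact prod_update_of_mem (mem_univ i) _ _

lemma expPay_eq_sum_mul_purePay (u : (I → Fin α) → ℝ) (x : I → Fin α → ℝ) (i : I) :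
    expPay u x = ∑ k, x i k * purePay u x i k := by
  simp only [purePay, expPay, prod_update_apply, mul_sum]
  rw [sum_comm]
  refine sum_congr rfl fun a _ => ?_
  simp only [ite_mul, one_mul, zero_mul, mul_ite, mul_zero, sum_ite_eq, mem_univ, if_true]
  rw [← mul_prod_erase univ (fun j => x j (a j)) (mem_univ i), ← sdiff_singleton_eq_erase]
  ring

lemma abs_sum_mul_le_half_sum_abs {d P : Fin α → ℝ} (hd : ∑ k, d k = 0)
    (hP : ∀ k, P k ∈ Set.Icc (0 : ℝ) 1) :
    |∑ k, d k * P k| ≤ (1 / 2) * ∑ k, |d k| := by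
  have hcentre : ∑ k, d k * P k = ∑ k, d k * (P k - 1 / 2) := by
    simp only [mul_sub, sum_sub_distrib, ← sum_mul, hd, zero_mul, sub_zero]
  rw [hcentre, mul_sum]
  refine (abs_sum_le_sum_abs _ _).trans (sum_le_sum fun k _ => ?_)
  rw [abs_mul, mul_comm]
  gcongr
  exact abs_sub_le_iff.mpr ⟨by linarith [(hP k).2], by linarith [(hP k).1]⟩

lemma abs_expPay_sub_le_tvDist {u : (I → Fin α) → ℝ} (hu : ∀ a, u a ∈ Set.Icc (0 : ℝ) 1)
    {x x' : I → Fin α → ℝ} (hx : ∀ j, IsDist α (x j)) (hx' : ∀ j, IsDist α (x' j)) (i : I)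
    (h : ∀ j, j ≠ i → x j = x' j) :
    |expPay u x - expPay u x'| ≤ tvDist (x i) (x' i) := by
  have hpure : purePay u x i = purePay u x' i := by
    funext k
    unfold purePay
    congr 1
    funext j
    rcases eq_or_ne j i with rfl | hj
    · simp only [Function.update_self]
    · simp only [Function.update_of_ne hj, h j hj]
  rw [expPay_eq_sum_mul_purePay u x i, expPay_eq_sum_mul_purePay u x' i, hpure, ← sum_sub_distrib]
  simp only [← sub_mul]
  exact abs_sum_mul_le_half_sum_abs (by rw [sum_sub_distrib, (hx i).2, (hx' i).2, sub_self])
    (purePay_mem_Icc hu hx' i)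

lemma abs_expPay_sub_le_sum_tvDist {u : (I → Fin α) → ℝ} (hu : ∀ a, u a ∈ Set.Icc (0 : ℝ) 1)
    {x x' : I → Fin α → ℝ} (hx : ∀ j, IsDist α (x j)) (hx' : ∀ j, IsDist α (x' j)) :
    |expPay u x - expPay u x'| ≤ ∑ i, tvDist (x i) (x' i) := by
  have hybrid : ∀ S : Finset I,
      |expPay u (S.piecewise x x') - expPay u x'| ≤ ∑ i ∈ S, tvDist (x i) (x' i) := by
    intro S
    induction S using Finset.induction with
    | empty => simp
    | insert a S ha ih =>
      have hS : ∀ j, IsDist α (S.piecewise x x' j) := fun j => by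
        by_cases hj : j ∈ S <;> simp [hj, hx j, hx' j]
      rw [piecewise_insert, sum_insert ha]
      have hswap := abs_expPay_sub_le_tvDist hu (IsDist.update hS a (hx a)) hS a
        fun j hj => Function.update_of_ne hj _ _
      rw [Function.update_self, piecewise_eq_of_notMem _ _ _ ha] at hswap
      exact (abs_sub_le _ _ _).trans (add_le_add hswap ih)
  simpa using hybrid univ

lemma abs_purePay_sub_le_sum_tvDist {u : (I → Fin α) → ℝ} (hu : ∀ a, u a ∈ Set.Icc (0 : ℝ) 1)
    {x x' : I → Fin α → ℝ} (hx : ∀ j, IsDist α (x j)) (hx' : ∀ j, IsDist α (x' j))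
    (i : I) (k : Fin α) :
    |purePay u x i k - purePay u x' i k| ≤ ∑ j ∈ univ.erase i, tvDist (x j) (x' j) := by
  refine (abs_expPay_sub_le_sum_tvDist hu (IsDist.update hx i (isDist_pure k))
    (IsDist.update hx' i (isDist_pure k))).trans_eq ?_
  rw [← add_sum_erase univ _ (mem_univ i)]
  simp only [Function.update_self, tvDist, sub_self, abs_zero, sum_const_zero, mul_zero, zero_add]
  exact sum_congr rfl fun j hj => by rw [Function.update_of_ne (ne_of_mem_erase hj),
    Function.update_of_ne (ne_of_mem_erase hj)]

end ProductProfiles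

section Truncation

variable {α : ℕ} {τ : ℝ} {p c y : Fin α → ℝ}

lemma truncation_nonneg (hp : IsDist α p) (hc : ∀ k, c k = if p k ≤ τ then p k else 0)
    (k : Fin α) : 0 ≤ c k := by
  rw [hc]; split_ifs
  exacts [hp.1 k, le_rfl]

lemma truncation_le (hp : IsDist α p) (hc : ∀ k, c k = if p k ≤ τ then p k else 0)
    (k : Fin α) : c k ≤ p k := by
  rw [hc]; split_ifs
  exacts [le_rfl, hp.1 k]

lemma sum_truncation_le (hτ : 0 ≤ τ) (hc : ∀ k, c k = if p k ≤ τ then p k else 0) :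
    ∑ k, c k ≤ α * τ := by
  have hcτ : ∀ k, c k ≤ τ := fun k => by rw [hc]; split_ifs <;> assumption
  simpa using sum_le_card_nsmul univ c τ fun k _ => hcτ k

lemma IsDist.of_truncation (hp : IsDist α p) (hτ : 0 ≤ τ) (hατ : α * τ < 1)
    (hc : ∀ k, c k = if p k ≤ τ then p k else 0)
    (hy : ∀ k, y k = (p k - c k) / (1 - ∑ j, c j)) : IsDist α y := by
  have hC : 0 < 1 - ∑ j, c j := by linarith [sum_truncation_le hτ hc]
  refine ⟨fun k => ?_, ?_⟩
  · rw [hy]; exact div_nonneg (sub_nonneg.mpr (truncation_le hp hc k)) hC.le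
  · simp only [hy, ← sum_div, sum_sub_distrib, hp.2]
    exact div_self hC.ne'

lemma tvDist_truncation_le (hp : IsDist α p) (hτ : 0 ≤ τ) (hατ : α * τ < 1)
    (hc : ∀ k, c k = if p k ≤ τ then p k else 0)
    (hy : ∀ k, y k = (p k - c k) / (1 - ∑ j, c j)) :
    tvDist y p ≤ α * τ / (1 - α * τ) := by
  set C := ∑ j, c j
  have hCα : C ≤ α * τ := sum_truncation_le hτ hc
  have hC0 : 0 ≤ C := sum_nonneg fun k _ => truncation_nonneg hp hc k
  have hC1 : 0 < 1 - C := by linarith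
  have hpoint : ∀ k, |y k - p k| ≤ (C * p k + c k) / (1 - C) := fun k => by
    rw [hy, div_sub' hC1.ne', abs_div, abs_of_pos hC1]
    gcongr
    refine (abs_sub_le_iff.mpr ⟨?_, ?_⟩) <;>
      nlinarith [hp.1 k, truncation_nonneg hp hc k, truncation_le hp hc k]
  calc tvDist y p ≤ (1 / 2) * ∑ k, (C * p k + c k) / (1 - C) := by
        unfold tvDist; gcongr with k; exact hpoint k
    _ = C / (1 - C) := by
        rw [← sum_div, sum_add_distrib, ← mul_sum, hp.2]
        field_simp
        ring
    _ ≤ α * τ / (1 - α * τ) := by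
        rw [div_le_div_iff₀ hC1 (by linarith)]
        nlinarith

lemma lt_of_truncation_pos (hc : ∀ k, c k = if p k ≤ τ then p k else 0)
    (hy : ∀ k, y k = (p k - c k) / (1 - ∑ j, c j)) {k : Fin α} (hk : 0 < y k) : τ < p k := by
  by_contra! hle
  rw [hy, hc, if_pos hle, sub_self, zero_div] at hk
  exact lt_irrefl 0 hk

end Truncation

section Chernoff

open Real

open MeasureTheory ProbabilityTheory in
/-- Hoeffding's lemma for a Bernoulli(`p`) variable. -/
lemma one_add_mul_exp_sub_one_le (p t : ℝ) (hp0 : 0 ≤ p) (hp1 : p ≤ 1) :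
    1 + p * (exp t - 1) ≤ exp (p * t + t ^ 2 / 8) := by
  let μ : Measure Bool :=
    ENNReal.ofReal p • Measure.dirac true + ENNReal.ofReal (1 - p) • Measure.dirac false
  have : IsProbabilityMeasure μ := ⟨by
    simp only [μ, Measure.coe_add, Measure.coe_smul, Pi.add_apply, Pi.smul_apply, measure_univ,
      smul_eq_mul, mul_one]
    rw [← ENNReal.ofReal_add hp0 (by linarith)]; simp⟩
  have integral_eq (f : Bool → ℝ) : ∫ b, f b ∂μ = p * f true + (1 - p) * f false := by
    rw [integral_fintype Integrable.of_finite]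
    simp [μ, Measure.real, hp0, sub_nonneg.mpr hp1]
  have hmgf := (hasSubgaussianMGF_of_mem_Icc (a := 0) (b := 1) (X := fun b => if b then 1 else 0)
    (μ := μ) (measurable_of_countable _).aemeasurable
    (ae_of_all _ fun b => by cases b <;> simp)).mgf_le t
  simp only [mgf, integral_eq] at hmgf
  norm_num at hmgf
  have e1 : exp (p * t) * exp (t * (1 - p)) = exp t := by rw [← exp_add]; ring_nf
  have e2 : exp (p * t) * exp (-(t * p)) = 1 := by rw [← exp_add]; ring_nf; simp
  calc 1 + p * (exp t - 1)
      = exp (p * t) * (p * exp (t * (1 - p)) + (1 - p) * exp (-(t * p))) := by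
        linear_combination (-p) * e1 - (1 - p) * e2
    _ ≤ exp (p * t) * exp (t ^ 2 / 8) := by
        gcongr
        exact hmgf.trans_eq (by ring_nf)
    _ = exp (p * t + t ^ 2 / 8) := (exp_add _ _).symm

variable {s α : ℕ}

lemma sum_prod_mul_exp_actCount_le {p : Fin s → Fin α → ℝ} (hp : ∀ j, IsDist α (p j))
    (k : Fin α) (l : ℝ) :
    ∑ g : Fin s → Fin α, (∏ j, p j (g j)) * exp (l * actCount g k)
      ≤ exp (l * ∑ j, p j k + s * (l ^ 2 / 8)) := by
  have hcount : ∀ g : Fin s → Fin α,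
      exp (l * actCount g k) = ∏ j, exp (l * if g j = k then 1 else 0) := fun g => by
    rw [← exp_sum, ← mul_sum, actCount, card_filter]
    push_cast
    rfl
  have hfactor : ∀ j, ∑ b, p j b * exp (l * if b = k then 1 else 0) = 1 + p j k * (exp l - 1) :=
    fun j => by
      have : ∀ b, p j b * exp (l * if b = k then 1 else 0)
          = p j b + if b = k then p j b * (exp l - 1) else 0 := fun b => by
        split_ifs <;> simp; ring
      simp only [this, sum_add_distrib, (hp j).2, sum_ite_eq', mem_univ, if_true]
  calc ∑ g : Fin s → Fin α, (∏ j, p j (g j)) * exp (l * actCount g k)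
      = ∏ j, (1 + p j k * (exp l - 1)) := by
        simp only [hcount, ← prod_mul_distrib, ← hfactor]
        exact (Fintype.prod_sum fun j b => p j b * exp (l * if b = k then 1 else 0)).symm
    _ ≤ ∏ j : Fin s, exp (p j k * l + l ^ 2 / 8) := by
        refine prod_le_prod (fun j _ => ?_) fun j _ =>
          one_add_mul_exp_sub_one_le _ l ((hp j).1 k) (IsDist.le_one (hp j) k)
        nlinarith [(hp j).1 k, IsDist.le_one (hp j) k, exp_pos l]
    _ = exp (l * ∑ j, p j k + s * (l ^ 2 / 8)) := by
        rw [← exp_sum, sum_add_distrib, mul_sum]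
        simp [mul_comm]

lemma card_le_mul_actCount_maj [NeZero α] (g : Fin s → Fin α) :
    s ≤ α * actCount g (maj g) := by
  have hmax : ∀ k, actCount g k ≤ actCount g (maj g) := by
    unfold maj
    exact (mem_filter.mp (min'_mem (univ.filter fun k : Fin α => ∀ k', actCount g k' ≤ actCount g k)
      _)).2
  have hsum : s = ∑ k, actCount g k := by
    simpa [actCount] using card_eq_sum_card_fiberwise (f := g) (s := univ) (t := univ)
      fun j _ => mem_univ (g j)
  calc s = ∑ k, actCount g k := hsum
    _ ≤ ∑ _k : Fin α, actCount g (maj g) := sum_le_sum fun k _ => hmax k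
    _ = α * actCount g (maj g) := by simp

/-- Chernoff: `maj g = k` forces `k` to be played at least `s / α` times, which is `s / (2 α)`
above the mean. -/
lemma sum_prod_mul_ite_maj_le [NeZero α] {p : Fin s → Fin α → ℝ} (hp : ∀ j, IsDist α (p j))
    {k : Fin α} (hk : ∀ j, p j k ≤ 1 / (2 * α)) :
    ∑ g : Fin s → Fin α, (∏ j, p j (g j)) * (if maj g = k then 1 else 0)
      ≤ exp (-s / (2 * α ^ 2)) := by
  have hα : (0 : ℝ) < α := by exact_mod_cast Nat.pos_of_neZero α
  set l : ℝ := 2 / α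
  have hind : ∀ g : Fin s → Fin α,
      (if maj g = k then (1 : ℝ) else 0) ≤ exp (-(l * s / α)) * exp (l * actCount g k) := by
    intro g
    rw [← exp_add]
    split_ifs with hg
    · refine one_le_exp ?_
      have : (s : ℝ) ≤ α * actCount g k := by exact_mod_cast hg ▸ card_le_mul_actCount_maj g
      have : l * s / α ≤ l * actCount g k := by
        rw [div_le_iff₀ hα]; nlinarith [show 0 ≤ l by positivity]
      linarith
    · positivity
  have hsum : ∑ j, p j k ≤ s / (2 * α) := by
    simpa [div_eq_mul_inv] using sum_le_card_nsmul univ (fun j => p j k) _ fun j _ => hk j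
  calc ∑ g : Fin s → Fin α, (∏ j, p j (g j)) * (if maj g = k then 1 else 0)
      ≤ ∑ g : Fin s → Fin α, (∏ j, p j (g j)) * (exp (-(l * s / α)) * exp (l * actCount g k)) :=
        sum_le_sum fun g _ => by gcongr; exacts [prod_nonneg fun j _ => (hp j).1 _, hind g]
    _ ≤ exp (-(l * s / α)) * exp (l * ∑ j, p j k + s * (l ^ 2 / 8)) := by
        simp only [mul_left_comm _ (exp (-(l * s / α))), ← mul_sum]
        gcongr
        exact sum_prod_mul_exp_actCount_le hp k l
    _ ≤ exp (-(l * s / α)) * exp (l * (s / (2 * α)) + s * (l ^ 2 / 8)) := by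
        gcongr
    _ = exp (-s / (2 * α ^ 2)) := by
        rw [← exp_add]
        congr 1
        simp only [l]
        field_simp
        ring

end Chernoff

section GroupGame

variable {α : ℕ}

noncomputable def blockDist {I J : Type*} [Fintype J] [DecidableEq J] (w : I × J → Fin α → ℝ)
    (φ : I → (J → Fin α) → Fin α) (i : I) (k : Fin α) : ℝ :=
  ∑ g : J → Fin α, (∏ j, w (i, j) (g j)) * if φ i g = k then 1 else 0

lemma prod_ite_eq_ite_eq {I : Type*} [Fintype I] (a b : I → Fin α) :
    (∏ i, if a i = b i then (1 : ℝ) else 0) = if a = b then 1 else 0 := by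
  split_ifs with h
  · simp [h]
  · obtain ⟨i, hi⟩ := Function.ne_iff.mp h
    exact prod_eq_zero (mem_univ i) (if_neg hi)

lemma expPay_comp_blocks {I J : Type*} [Fintype I] [DecidableEq I] [Fintype J] [DecidableEq J]
    (v : (I → Fin α) → ℝ) (w : I × J → Fin α → ℝ) (φ : I → (J → Fin α) → Fin α) :
    expPay (fun a => v fun i => φ i fun j => a (i, j)) w = expPay v (blockDist w φ) := by
  have hv : ∀ a : I × J → Fin α, v (fun i => φ i fun j => a (i, j))
      = ∑ b : I → Fin α, (∏ i, if φ i (fun j => a (i, j)) = b i then (1 : ℝ) else 0) * v b :=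
    fun a => by simp [prod_ite_eq_ite_eq]
  have hblocks : ∀ b : I → Fin α, ∑ a : I × J → Fin α,
      (∏ ij, w ij (a ij)) * ∏ i, (if φ i (fun j => a (i, j)) = b i then (1 : ℝ) else 0)
        = ∏ i, blockDist w φ i (b i) := fun b => by
    unfold blockDist
    rw [Fintype.prod_sum, ← (Equiv.curry I J (Fin α)).sum_comp]
    refine sum_congr rfl fun a _ => ?_
    rw [Fintype.prod_prod_type, ← prod_mul_distrib]
    rfl
  simp only [expPay, hv, mul_sum]
  rw [sum_comm]
  refine sum_congr rfl fun b _ => ?_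
  rw [← hblocks, sum_mul]
  exact sum_congr rfl fun a _ => by ring

lemma isDist_blockDist {I J : Type*} [Fintype J] [DecidableEq J] {w : I × J → Fin α → ℝ}
    (hw : ∀ ij, IsDist α (w ij)) (φ : I → (J → Fin α) → Fin α) (i : I) :
    IsDist α (blockDist w φ i) := by
  refine ⟨fun k => sum_nonneg fun g _ => mul_nonneg (prod_nonneg fun j _ => (hw _).1 _) ?_, ?_⟩
  · split_ifs <;> norm_num
  · unfold blockDist
    rw [sum_comm]
    simp only [← mul_sum, sum_ite_eq, mem_univ, if_true, mul_one]
    exact sum_prod_eq_one fun j => hw (i, j)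

lemma sum_prod_mul_ite_apply_eq {J : Type*} [Fintype J] [DecidableEq J] {p : J → Fin α → ℝ}
    (hp : ∀ j, IsDist α (p j)) (j : J) (k : Fin α) :
    ∑ g : J → Fin α, (∏ j', p j' (g j')) * (if g j = k then 1 else 0) = p j k := by
  have hfactor : ∀ g : J → Fin α, (∏ j', p j' (g j')) * (if g j = k then 1 else 0)
      = p j k * ∏ j', Function.update p j (fun b => if b = k then 1 else 0) j' (g j') := by
    intro g
    rw [prod_update_apply, ← mul_prod_erase univ _ (mem_univ j), sdiff_singleton_eq_erase]
    split_ifs with h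
    · rw [h]; ring
    · simp
  simp only [hfactor, ← mul_sum, sum_prod_eq_one (IsDist.update hp j (isDist_pure k)), mul_one]

lemma majDist_eq_blockDist {n s : ℕ} [NeZero α] (x : Fin n × Fin s → Fin α → ℝ) :
    majDist x = blockDist x fun _ => maj :=
  rfl

lemma purePay_groupPayoff {n s : ℕ} [NeZero α] (u : Fin n → (Fin n → Fin α) → ℝ)
    {x : Fin n × Fin s → Fin α → ℝ} (hx : ∀ ij, IsDist α (x ij)) (i : Fin n) (j : Fin s)
    (k : Fin α) :
    purePay (groupPayoff u i j) x (i, j) k = purePay (u i) (majDist x) i k := by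
  set φ : Fin n → (Fin s → Fin α) → Fin α := Function.update (fun _ => maj) i fun g => g j
  have hgroup : groupPayoff u i j = fun a => u i fun i' => φ i' fun j' => a (i', j') := by
    funext a
    unfold groupPayoff
    congr 1
    funext i'
    rcases eq_or_ne i' i with rfl | h
    · simp [φ]
    · simp [φ, h]
  unfold purePay
  rw [hgroup, expPay_comp_blocks]
  congr 1
  funext i' k'
  rcases eq_or_ne i' i with rfl | h
  · rw [blockDist, Function.update_self]
    simp only [φ, Function.update_self]
    rw [sum_prod_mul_ite_apply_eq (fun j' => IsDist.update hx _ (isDist_pure k) (i', j')) j k',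
      Function.update_self]
  · rw [Function.update_of_ne h, majDist_eq_blockDist]
    simp only [blockDist, φ, Function.update_of_ne h]
    refine sum_congr rfl fun g _ => ?_
    congr 1
    exact prod_congr rfl fun j' _ => by rw [Function.update_of_ne (by simp [h])]

end GroupGame

lemma mul_sub_le_of_sub_le_sum_mul {α : ℕ} {p P : Fin α → ℝ} (hp : IsDist α p) {m : Fin α}
    (hm : ∀ k, P k ≤ P m) {ε : ℝ} (h : P m - ε ≤ ∑ k, p k * P k) (k : Fin α) :
    p k * (P m - P k) ≤ ε := by
  have hregret : ∑ k, p k * P k = P m - ∑ k, p k * (P m - P k) := by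
    simp only [mul_sub, sum_sub_distrib, ← sum_mul, hp.2, one_mul, sub_sub_cancel]
  have hterm : p k * (P m - P k) ≤ ∑ k, p k * (P m - P k) :=
    single_le_sum (fun k _ => mul_nonneg (hp.1 k) (sub_nonneg.mpr (hm k))) (mem_univ k)
  linarith

lemma exp_neg_div_le_of_eq_ceil_log {n α s : ℕ} {ε : ℝ} (hn : 0 < n) (hα : 0 < α) (hε : 0 < ε)
    (hs : s = 2 * α ^ 2 * ⌈Real.log ((n : ℝ) / ε)⌉₊) :
    Real.exp (-s / (2 * α ^ 2)) ≤ ε / n := by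
  have hlog : Real.log ((n : ℝ) / ε) ≤ s / (2 * α ^ 2) := by
    rw [hs]
    push_cast
    rw [mul_div_cancel_left₀ _ (by positivity)]
    exact Nat.le_ceil _
  calc Real.exp (-s / (2 * α ^ 2)) ≤ Real.exp (-Real.log ((n : ℝ) / ε)) := by
        rw [neg_div]; gcongr
    _ = ε / n := by rw [Real.exp_neg, Real.exp_log (by positivity), inv_div]

lemma purePay_majDist_le_of_lt_majDist {n s α : ℕ} [NeZero α] {u : Fin n → (Fin n → Fin α) → ℝ}
    {x : Fin n × Fin s → Fin α → ℝ} (hx : ∀ ij, IsDist α (x ij)) {ε : ℝ} (hε : 0 < ε)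
    (hn : 0 < n) (hs : s = 2 * α ^ 2 * ⌈Real.log ((n : ℝ) / ε)⌉₊)
    (hane : IsANE (fun ij : Fin n × Fin s => groupPayoff u ij.1 ij.2) x ε)
    {i : Fin n} {k : Fin α} (hk : ε / n < majDist x i k) (k' : Fin α) :
    purePay (u i) (majDist x) i k' ≤ purePay (u i) (majDist x) i k + 2 * α * ε := by
  set P := purePay (u i) (majDist x) i
  obtain ⟨m, -, hm⟩ := exists_max_image univ P ⟨k, mem_univ k⟩
  refine (hm k' (mem_univ k')).trans ?_
  by_contra! hgap
  have hα : 0 < α := Nat.pos_of_neZero α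
  -- a group member who loses more than `2 α ε` on `k` can afford to play it only rarely
  have hrare : ∀ j, x (i, j) k ≤ 1 / (2 * α) := by
    intro j
    have hbr := hane (i, j) m
    dsimp only at hbr
    rw [expPay_eq_sum_mul_purePay _ _ (i, j)] at hbr
    simp only [purePay_groupPayoff u hx] at hbr
    have hregret := mul_sub_le_of_sub_le_sum_mul (hx (i, j)) (fun k => hm k (mem_univ k)) hbr k
    rw [le_div_iff₀ (by positivity)]
    nlinarith [(hx (i, j)).1 k]
  have hmaj : majDist x i k ≤ Real.exp (-s / (2 * α ^ 2)) :=
    sum_prod_mul_ite_maj_le (fun j => hx (i, j)) hrare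
  linarith [exp_neg_div_le_of_eq_ceil_log hn hα hε hs]

lemma sub_one_mul_div_one_sub_le {N q : ℝ} (hq : 0 ≤ q) (hq1 : q < 1) (hNq : N * q ≤ 1) :
    (N - 1) * (q / (1 - q)) ≤ N * q := by
  rw [mul_div_assoc', div_le_iff₀ (by linarith)]
  nlinarith

theorem ane_to_wsne_main_general {n α : ℕ} [NeZero α]
    (ε : ℝ) (hε : 0 < ε) (hαεn : (α : ℝ) * ε / n < 1)
    {s : ℕ} (hs : s = 2 * α ^ 2 * ⌈Real.log ((n : ℝ) / ε)⌉₊)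
    (u : Fin n → (Fin n → Fin α) → ℝ)
    (hu : ∀ i a, u i a ∈ Set.Icc (0:ℝ) 1)
    (x : Fin n × Fin s → Fin α → ℝ) (hx : ∀ ij, IsDist α (x ij))
    (hane : IsANE (fun ij : Fin n × Fin s => groupPayoff u ij.1 ij.2) x ε)
    (c : Fin n → Fin α → ℝ)
    (hc : ∀ i k, c i k = if majDist x i k ≤ ε / n then majDist x i k else 0)
    (y : Fin n → Fin α → ℝ)
    (hy : ∀ i k, y i k = (majDist x i k - c i k) / (1 - ∑ j, c i j)) :
    IsWSNE u y (4 * α * ε) := by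
  intro i k hk k'
  have hn : 0 < n := i.pos
  have hτ : 0 ≤ ε / n := by positivity
  have hατ : α * (ε / n) < 1 := by rwa [← mul_div_assoc]
  have hX : ∀ i', IsDist α (majDist x i') := isDist_blockDist hx _
  have hY : ∀ i', IsDist α (y i') := fun i' => (hX i').of_truncation hτ hατ (hc i') (hy i')
  rcases lt_or_ge 1 (α * ε) with hbig | hsmall
  · linarith [(purePay_mem_Icc (hu i) hY i k).1, (purePay_mem_Icc (hu i) hY i k').2]
  have htransfer : ∀ k'', |purePay (u i) y i k'' - purePay (u i) (majDist x) i k''| ≤ α * ε :=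
    fun k'' => calc
      _ ≤ ∑ i' ∈ univ.erase i, tvDist (y i') (majDist x i') :=
          abs_purePay_sub_le_sum_tvDist (hu i) hY hX i k''
      _ ≤ (n - 1) * (α * (ε / n) / (1 - α * (ε / n))) := by
          refine (sum_le_card_nsmul (univ.erase i) _ _ fun i' _ =>
            tvDist_truncation_le (hX i') hτ hατ (hc i') (hy i')).trans_eq ?_
          rw [card_erase_of_mem (mem_univ i), card_univ, Fintype.card_fin, nsmul_eq_mul,
            Nat.cast_pred hn]
      _ ≤ n * (α * (ε / n)) := sub_one_mul_div_one_sub_le (by positivity) hατ (by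
          rwa [mul_left_comm, mul_div_cancel₀ _ (by positivity)])
      _ = α * ε := by field_simp
  have hgap := purePay_majDist_le_of_lt_majDist hx hε hn hs hane
    (lt_of_truncation_pos (hc i) (hy i) hk) k'
  have hk := abs_le.mp (htransfer k)
  have hk' := abs_le.mp (htransfer k')
  linarith

theorem ane_to_wsne_main {n α : ℕ} (hn : 0 < n) (hα : 0 < α) [NeZero α]
    (ε : ℝ) (hε : 0 < ε) (hε1 : ε < 1) (hαεn : (α : ℝ) * ε / n < 1)
    {s : ℕ} (hs : s = 2 * α ^ 2 * ⌈Real.log ((n : ℝ) / ε)⌉₊)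
    (u : Fin n → (Fin n → Fin α) → ℝ)
    (hu : ∀ i a, u i a ∈ Set.Icc (0:ℝ) 1)
    (x : Fin n × Fin s → Fin α → ℝ) (hx : ∀ ij, IsDist α (x ij))
    (hane : IsANE (fun ij : Fin n × Fin s => groupPayoff u ij.1 ij.2) x ε)
    (c : Fin n → Fin α → ℝ)
    (hc : ∀ i k, c i k = if majDist x i k ≤ ε / n then majDist x i k else 0)
    (y : Fin n → Fin α → ℝ)
    (hy : ∀ i k, y i k = (majDist x i k - c i k) / (1 - ∑ j, c i j)) :
    IsWSNE u y (4 * α * ε) :=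
  ane_to_wsne_main_general ε hε hαεn hs u hu x hx hane c hc y hy
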